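/- arXiv:0710.4521 — 3 statements merged into one kernel-verified Lean document; each statement's English description precedes it below -/
import Mathlib

section
/- Let C = (c_{ij})_{i,j∈I} be a generalized Cartan matrix and χ a bicharacter on ℤ^I with values in 𝕜∖{0} such that χ is i-finite for all i ∈ I with c^χ_{ij} = c_{ij} for all i,j ∈ I, and q_{ii}^{c_{ij}} = q_{ij} q_{ji} for all i,j ∈ I (χ is of Cartan type). Then for every p ∈ I: r_p(χ)(ε_i,ε_i) = q_{ii} and r_p(χ)(ε_i,ε_j) · r_p(χ)(ε_j,ε_i) = r_p(χ)(ε_i,ε_i)^{c_{ij}} for all i,j ∈ I; that is, r_p(χ) is again of Cartan type with the same Cartan matrix C. Moreover, if in addition there are positive integers d_i with d_i c_{ij} = d_j c_{ji} for all i,j ∈ I and an element q ∈ 𝕜∖{0} with q_{ij} = q^{d_i c_{ij}} for all i,j ∈ I, then r_p(χ) = χ for all p ∈ I. -/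
/-!
Bimultiplicativity gives `χ(a - m e, b - n e) = χ(a,b) χ(e,e)^{mn} / (χ(a,e)^n χ(e,b)^m)`, and
`r_p(χ)(ε_i, ε_j)` is this value for `e = ε_p`, `m = c_{pi}`, `n = c_{pj}`. In Cartan type
`χ(ε_k,ε_p) χ(ε_p,ε_k) = q_{pp}^{c_{pk}}`, which makes the diagonal values `q_{kk}` invariant;
polarization `χ(a+b,a+b) = χ(a,a) χ(b,b) · χ(a,b) χ(b,a)` transports this to the symmetrized
values. In the symmetrizable case `χ(ε_i,ε_p)`, `χ(ε_p,ε_j)` and `χ(ε_p,ε_p)` are the powers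
`c_{pi}`, `c_{pj}` and `2` of `t = q^{d_p}`, so the correction factor is `t^{2mn - mn - nm} = 1`:
`r_p(χ)` agrees with `χ` on pairs of basis vectors, hence everywhere.
-/

/-- The quantum integer `[n]_q = 1 + q + ⋯ + q^{n-1}` for `n ∈ ℕ`. -/
def qNat {𝕜 : Type*} [Field 𝕜] (q : 𝕜) (n : ℕ) : 𝕜 :=
  ∑ i ∈ Finset.range n, q ^ i

/-- The quantum factorial `[n]_q! = [1]_q [2]_q ⋯ [n]_q`. -/
def qFact {𝕜 : Type*} [Field 𝕜] (q : 𝕜) (n : ℕ) : 𝕜 :=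
  ∏ i ∈ Finset.range n, qNat q (i + 1)

variable {𝕜 : Type*} [Field 𝕜] {I : Type*} [Fintype I] [DecidableEq I]

/-- The standard basis vector `ε_i` of `ℤ^I`. -/
def eps (i : I) : I → ℤ := Pi.single i 1

/-- `χ : ℤ^I × ℤ^I → 𝕜∖{0}` is a bicharacter. -/
def IsBichar (χ : (I → ℤ) → (I → ℤ) → 𝕜) : Prop :=
  (∀ a b c : I → ℤ, χ (a + b) c = χ a c * χ b c) ∧
  (∀ c a b : I → ℤ, χ c (a + b) = χ c a * χ c b) ∧
  (∀ a b : I → ℤ, χ a b ≠ 0)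

/-- `χ` is `p`-finite: for every `j ≠ p` there is `m ∈ ℕ₀` with
`[m+1]_{q_{pp}} = 0` or `q_{pp}^m q_{pj} q_{jp} = 1`. -/
def IsPFinite (χ : (I → ℤ) → (I → ℤ) → 𝕜) (p : I) : Prop :=
  ∀ j, j ≠ p → ∃ m : ℕ,
    qNat (χ (eps p) (eps p)) (m + 1) = 0 ∨
    χ (eps p) (eps p) ^ m * χ (eps p) (eps j) * χ (eps j) (eps p) = 1

open Classical in
/-- The Cartan integers `c^χ_{pj}` of a (`p`-finite) bicharacter `χ`. -/
noncomputable def cartan (χ : (I → ℤ) → (I → ℤ) → 𝕜) (p j : I) : ℤ :=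
  if p = j then 2
  else if h : ∃ m : ℕ,
      qNat (χ (eps p) (eps p)) (m + 1) = 0 ∨
      χ (eps p) (eps p) ^ m * χ (eps p) (eps j) * χ (eps j) (eps p) = 1
    then -(Nat.find h) else 0

/-- The reflection `σ_p^χ ∈ Aut(ℤ^I)`, `σ_p^χ(ε_j) = ε_j − c^χ_{pj} ε_p`
(an involution, so equal to its own inverse). -/
noncomputable def sigmaChi (χ : (I → ℤ) → (I → ℤ) → 𝕜) (p : I) (a : I → ℤ) : I → ℤ :=
  a - (∑ j, cartan χ p j * a j) • eps p

/-- `r_p(χ) = (σ_p^χ)^*χ`, i.e. `r_p(χ)(a,b) = χ((σ_p^χ)⁻¹ a, (σ_p^χ)⁻¹ b)`. -/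
noncomputable def rp (χ : (I → ℤ) → (I → ℤ) → 𝕜) (p : I) :
    (I → ℤ) → (I → ℤ) → 𝕜 :=
  fun a b => χ (sigmaChi χ p a) (sigmaChi χ p b)

theorem AddChar.map_sum_eq_prod {ι A M : Type*} [AddCommMonoid A] [CommMonoid M]
    (ψ : AddChar A M) (s : Finset ι) (f : ι → A) : ψ (∑ i ∈ s, f i) = ∏ i ∈ s, ψ (f i) :=
  congrArg Additive.toMul (map_sum ψ.toAddMonoidHom f s)

theorem sum_zsmul_eps (a : I → ℤ) : ∑ i, a i • eps i = a :=
  (pi_eq_sum_univ' a).symm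

namespace IsBichar

section

variable {ι : Type*} {χ : (ι → ℤ) → (ι → ℤ) → 𝕜}

theorem apply_zero_left (hχ : IsBichar χ) (b : ι → ℤ) : χ 0 b = 1 := by
  have h := hχ.1 0 0 b
  rwa [add_zero, eq_comm, mul_eq_left₀ (hχ.2.2 0 b)] at h

theorem apply_zero_right (hχ : IsBichar χ) (a : ι → ℤ) : χ a 0 = 1 := by
  have h := hχ.2.1 a 0 0
  rwa [add_zero, eq_comm, mul_eq_left₀ (hχ.2.2 a 0)] at h

def addCharLeft (hχ : IsBichar χ) (b : ι → ℤ) : AddChar (ι → ℤ) 𝕜 where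
  toFun a := χ a b
  map_zero_eq_one' := hχ.apply_zero_left b
  map_add_eq_mul' a a' := hχ.1 a a' b

def addCharRight (hχ : IsBichar χ) (a : ι → ℤ) : AddChar (ι → ℤ) 𝕜 where
  toFun b := χ a b
  map_zero_eq_one' := hχ.apply_zero_right a
  map_add_eq_mul' := hχ.2.1 a

theorem apply_sub_left (hχ : IsBichar χ) (a a' b : ι → ℤ) : χ (a - a') b = χ a b / χ a' b :=
  (hχ.addCharLeft b).map_sub_eq_div a a'

theorem apply_sub_right (hχ : IsBichar χ) (a b b' : ι → ℤ) : χ a (b - b') = χ a b / χ a b' :=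
  (hχ.addCharRight a).map_sub_eq_div b b'

theorem apply_zsmul_left (hχ : IsBichar χ) (n : ℤ) (a b : ι → ℤ) : χ (n • a) b = χ a b ^ n :=
  (hχ.addCharLeft b).map_zsmul_eq_zpow n a

theorem apply_zsmul_right (hχ : IsBichar χ) (n : ℤ) (a b : ι → ℤ) : χ a (n • b) = χ a b ^ n :=
  (hχ.addCharRight a).map_zsmul_eq_zpow n b

theorem apply_sub_zsmul_sub_zsmul (hχ : IsBichar χ) (a b e : ι → ℤ) (m n : ℤ) :
    χ (a - m • e) (b - n • e) = χ a b * χ e e ^ (m * n) / (χ a e ^ n * χ e b ^ m) := by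
  simp only [hχ.apply_sub_left, hχ.apply_sub_right, hχ.apply_zsmul_left, hχ.apply_zsmul_right,
    ← zpow_mul, mul_comm n m, div_div_eq_mul_div]
  ring

theorem apply_add_self (hχ : IsBichar χ) (a b : ι → ℤ) :
    χ (a + b) (a + b) = χ a a * χ b b * (χ a b * χ b a) := by
  rw [hχ.1, hχ.2.1, hχ.2.1]
  ring

theorem apply_sub_zsmul_self (hχ : IsBichar χ) {a e : ι → ℤ} {m : ℤ}
    (h : χ a e * χ e a = χ e e ^ m) : χ (a - m • e) (a - m • e) = χ a a := by
  rw [hχ.apply_sub_zsmul_sub_zsmul, ← mul_zpow, h, ← zpow_mul, mul_div_assoc, div_self, mul_one]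
  exact zpow_ne_zero _ (hχ.2.2 e e)

theorem mul_swap_apply_sub_zsmul (hχ : IsBichar χ) {a b e : ι → ℤ} {m n : ℤ}
    (ha : χ a e * χ e a = χ e e ^ m) (hb : χ b e * χ e b = χ e e ^ n) :
    χ (a - m • e) (b - n • e) * χ (b - n • e) (a - m • e) = χ a b * χ b a := by
  have hab : χ (a + b) e * χ e (a + b) = χ e e ^ (m + n) := by
    rw [hχ.1, hχ.2.1, zpow_add₀ (hχ.2.2 e e), ← ha, ← hb]
    ring
  have key := hχ.apply_sub_zsmul_self hab
  rw [add_smul, show a + b - (m • e + n • e) = (a - m • e) + (b - n • e) by abel,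
    hχ.apply_add_self, hχ.apply_add_self, hχ.apply_sub_zsmul_self ha,
    hχ.apply_sub_zsmul_self hb] at key
  exact mul_left_cancel₀ (mul_ne_zero (hχ.2.2 a a) (hχ.2.2 b b)) key

theorem apply_sub_zsmul_sub_zsmul_of_eq_zpow (hχ : IsBichar χ) {a b e : ι → ℤ} {m n : ℤ}
    {t : 𝕜} (he : χ e e = t ^ (2 : ℤ)) (ha : χ a e = t ^ m) (hb : χ e b = t ^ n) :
    χ (a - m • e) (b - n • e) = χ a b := by
  have ht : t ≠ 0 := fun h => hχ.2.2 e e (by simp [he, h])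
  rw [hχ.apply_sub_zsmul_sub_zsmul, he, ha, hb, ← zpow_mul, ← zpow_mul, ← zpow_mul,
    ← zpow_add₀ ht, mul_div_assoc, show 2 * (m * n) = m * n + n * m by ring, div_self
      (zpow_ne_zero _ ht), mul_one]

theorem comp (hχ : IsBichar χ) (f : (ι → ℤ) →+ (ι → ℤ)) : IsBichar fun a b => χ (f a) (f b) :=
  ⟨fun a b c => by simp only [map_add, hχ.1], fun c a b => by simp only [map_add, hχ.2.1],
    fun a b => hχ.2.2 _ _⟩

end

theorem apply_eq_prod_left {χ : (I → ℤ) → (I → ℤ) → 𝕜} (hχ : IsBichar χ) (a b : I → ℤ) :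
    χ a b = ∏ i, χ (eps i) b ^ a i := by
  conv_lhs => rw [← sum_zsmul_eps a]
  exact ((hχ.addCharLeft b).map_sum_eq_prod _ _).trans
    (Finset.prod_congr rfl fun i _ => hχ.apply_zsmul_left _ _ _)

theorem apply_eq_prod_right {χ : (I → ℤ) → (I → ℤ) → 𝕜} (hχ : IsBichar χ) (a b : I → ℤ) :
    χ a b = ∏ j, χ a (eps j) ^ b j := by
  conv_lhs => rw [← sum_zsmul_eps b]
  exact ((hχ.addCharRight a).map_sum_eq_prod _ _).trans
    (Finset.prod_congr rfl fun j _ => hχ.apply_zsmul_right _ _ _)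

theorem ext {χ ψ : (I → ℤ) → (I → ℤ) → 𝕜} (hχ : IsBichar χ) (hψ : IsBichar ψ)
    (h : ∀ i j, χ (eps i) (eps j) = ψ (eps i) (eps j)) : χ = ψ := by
  funext a b
  rw [hχ.apply_eq_prod_left, hψ.apply_eq_prod_left]
  refine Finset.prod_congr rfl fun i _ => ?_
  rw [hχ.apply_eq_prod_right _ b, hψ.apply_eq_prod_right _ b]
  simp only [h]

end IsBichar

section Reflection

variable (χ : (I → ℤ) → (I → ℤ) → 𝕜) (p : I)

theorem sigmaChi_add (a b : I → ℤ) : sigmaChi χ p (a + b) = sigmaChi χ p a + sigmaChi χ p b := by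
  simp only [sigmaChi, Pi.add_apply, mul_add, Finset.sum_add_distrib, add_smul]
  abel

theorem sigmaChi_eps (k : I) : sigmaChi χ p (eps k) = eps k - cartan χ p k • eps p := by
  simp [sigmaChi, eps, Pi.single_apply]

theorem rp_eps_eps (i j : I) :
    rp χ p (eps i) (eps j) = χ (eps i - cartan χ p i • eps p) (eps j - cartan χ p j • eps p) := by
  simp only [rp, sigmaChi_eps]

variable {χ}

theorem IsBichar.rp (hχ : IsBichar χ) : IsBichar (rp χ p) :=
  hχ.comp (AddMonoidHom.mk' (sigmaChi χ p) (sigmaChi_add χ p))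

end Reflection

theorem cartanType_rp_general (χ : (I → ℤ) → (I → ℤ) → 𝕜) (hχ : IsBichar χ)
    (c : I → I → ℤ)
    (hGCM1 : ∀ i, c i i = 2)
    (hc : ∀ i j, cartan χ i j = c i j)
    (hCartanType : ∀ i j, χ (eps i) (eps i) ^ (c i j) =
      χ (eps i) (eps j) * χ (eps j) (eps i)) :
    (∀ p i j : I,
      rp χ p (eps i) (eps i) = χ (eps i) (eps i) ∧
      rp χ p (eps i) (eps j) * rp χ p (eps j) (eps i) =
        (rp χ p (eps i) (eps i)) ^ (c i j)) ∧
    (∀ (d : I → ℕ) (q : 𝕜), (∀ i, 0 < d i) → q ≠ 0 →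
      (∀ i j, (d i : ℤ) * c i j = (d j : ℤ) * c j i) →
      (∀ i j, χ (eps i) (eps j) = q ^ ((d i : ℤ) * c i j)) →
      ∀ p, rp χ p = χ) := by
  refine ⟨fun p i j => ?_, fun d q _ _ hsym hval p => ?_⟩
  · have hroot : ∀ k, χ (eps k) (eps p) * χ (eps p) (eps k) = χ (eps p) (eps p) ^ c p k :=
      fun k => by rw [hCartanType, mul_comm]
    have hdiag : ∀ k, rp χ p (eps k) (eps k) = χ (eps k) (eps k) := fun k => by
      rw [rp_eps_eps, hc]
      exact hχ.apply_sub_zsmul_self (hroot k)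
    refine ⟨hdiag i, ?_⟩
    rw [rp_eps_eps, rp_eps_eps, hc, hc, hχ.mul_swap_apply_sub_zsmul (hroot i) (hroot j), hdiag,
      hCartanType]
  · refine (hχ.rp p).ext hχ fun i j => ?_
    rw [rp_eps_eps, hc, hc]
    refine hχ.apply_sub_zsmul_sub_zsmul_of_eq_zpow (t := q ^ (d p : ℤ)) ?_ ?_ ?_
    · rw [hval, hGCM1, ← zpow_mul]
    · rw [hval, hsym, ← zpow_mul]
    · rw [hval, ← zpow_mul]

/-- Example (ex:cartantype): if `χ` is of Cartan type with generalized Cartan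
matrix `C` (i.e. `χ` is `i`-finite with `c^χ_{ij} = c_{ij}` and
`q_{ii}^{c_{ij}} = q_{ij} q_{ji}`), then each `r_p(χ)` is again of Cartan type
with the same Cartan matrix `C`; and if moreover `q_{ij} = q^{d_i c_{ij}}`
for positive integers `d_i` with `d_i c_{ij} = d_j c_{ji}` and some
`q ∈ 𝕜∖{0}`, then `r_p(χ) = χ` for all `p`. -/
theorem cartanType_rp (χ : (I → ℤ) → (I → ℤ) → 𝕜) (hχ : IsBichar χ)
    (c : I → I → ℤ)
    (hGCM1 : ∀ i, c i i = 2)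
    (hGCM2 : ∀ i j, i ≠ j → c i j ≤ 0)
    (hGCM3 : ∀ i j, c i j = 0 → c j i = 0)
    (hfin : ∀ i, IsPFinite χ i)
    (hc : ∀ i j, cartan χ i j = c i j)
    (hCartanType : ∀ i j, χ (eps i) (eps i) ^ (c i j) =
      χ (eps i) (eps j) * χ (eps j) (eps i)) :
    (∀ p i j : I,
      rp χ p (eps i) (eps i) = χ (eps i) (eps i) ∧
      rp χ p (eps i) (eps j) * rp χ p (eps j) (eps i) =
        (rp χ p (eps i) (eps i)) ^ (c i j)) ∧
    (∀ (d : I → ℕ) (q : 𝕜), (∀ i, 0 < d i) → q ≠ 0 →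
      (∀ i j, (d i : ℤ) * c i j = (d j : ℤ) * c j i) →
      (∀ i j, χ (eps i) (eps j) = q ^ ((d i : ℤ) * c i j)) →
      ∀ p, rp χ p = χ) :=
  cartanType_rp_general χ hχ c hGCM1 hc hCartanType
end

section
/- Let χ be a bicharacter on ℤ^I with values in 𝕜∖{0}. There exists a unique algebra antiautomorphism φ₄ of 𝒰(χ) (a bijective 𝕜-linear map with φ₄(1) = 1 and φ₄(XY) = φ₄(Y)φ₄(X) for all X, Y) such that φ₄(K_i) = K_i, φ₄(K_i^{−1}) = K_i^{−1}, φ₄(L_i) = L_i, φ₄(L_i^{−1}) = L_i^{−1}, φ₄(E_i) = F_i, and φ₄(F_i) = E_i for all i ∈ I. -/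
variable {𝕜 : Type*} [Field 𝕜] {I : Type*} [Fintype I] [DecidableEq I]

/-- The generators `K_i, K_i⁻¹, L_i, L_i⁻¹, E_i, F_i` of `𝒰(χ)`. -/
inductive UGen (I : Type*) where
  | K (i : I)
  | Kinv (i : I)
  | L (i : I)
  | Linv (i : I)
  | E (i : I)
  | F (i : I)

/-- The toral generators are `K_i, K_i⁻¹, L_i, L_i⁻¹`. -/
def UGen.IsToral {I : Type*} : UGen I → Prop
  | .K _ => True
  | .Kinv _ => True
  | .L _ => True
  | .Linv _ => True
  | _ => False

variable (𝕜) in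
/-- The defining relations of the Drinfel'd double `𝒰(χ)`:
all `K_i^{±1}, L_j^{±1}` commute pairwise; `K_iK_i⁻¹ = 1 = L_iL_i⁻¹`;
`K_iE_j = q_{ij}E_jK_i`, `L_iE_j = q_{ji}⁻¹E_jL_i`, `K_iF_j = q_{ij}⁻¹F_jK_i`,
`L_iF_j = q_{ji}F_jL_i`; `E_iF_j − F_jE_i = δ_{ij}(K_i − L_i)`. -/
inductive URel (χ : (I → ℤ) → (I → ℤ) → 𝕜) :
    FreeAlgebra 𝕜 (UGen I) → FreeAlgebra 𝕜 (UGen I) → Prop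
  | comm (x y : UGen I) (hx : x.IsToral) (hy : y.IsToral) :
      URel χ (FreeAlgebra.ι 𝕜 x * FreeAlgebra.ι 𝕜 y)
        (FreeAlgebra.ι 𝕜 y * FreeAlgebra.ι 𝕜 x)
  | KKinv (i : I) :
      URel χ (FreeAlgebra.ι 𝕜 (.K i) * FreeAlgebra.ι 𝕜 (.Kinv i)) 1
  | LLinv (i : I) :
      URel χ (FreeAlgebra.ι 𝕜 (.L i) * FreeAlgebra.ι 𝕜 (.Linv i)) 1
  | KE (i j : I) :
      URel χ (FreeAlgebra.ι 𝕜 (.K i) * FreeAlgebra.ι 𝕜 (.E j))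
        (χ (eps i) (eps j) • (FreeAlgebra.ι 𝕜 (.E j) * FreeAlgebra.ι 𝕜 (.K i)))
  | LE (i j : I) :
      URel χ (FreeAlgebra.ι 𝕜 (.L i) * FreeAlgebra.ι 𝕜 (.E j))
        ((χ (eps j) (eps i))⁻¹ • (FreeAlgebra.ι 𝕜 (.E j) * FreeAlgebra.ι 𝕜 (.L i)))
  | KF (i j : I) :
      URel χ (FreeAlgebra.ι 𝕜 (.K i) * FreeAlgebra.ι 𝕜 (.F j))
        ((χ (eps i) (eps j))⁻¹ • (FreeAlgebra.ι 𝕜 (.F j) * FreeAlgebra.ι 𝕜 (.K i)))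
  | LF (i j : I) :
      URel χ (FreeAlgebra.ι 𝕜 (.L i) * FreeAlgebra.ι 𝕜 (.F j))
        (χ (eps j) (eps i) • (FreeAlgebra.ι 𝕜 (.F j) * FreeAlgebra.ι 𝕜 (.L i)))
  | EF (i j : I) :
      URel χ (FreeAlgebra.ι 𝕜 (.E i) * FreeAlgebra.ι 𝕜 (.F j) -
          FreeAlgebra.ι 𝕜 (.F j) * FreeAlgebra.ι 𝕜 (.E i))
        (if i = j then FreeAlgebra.ι 𝕜 (.K i) - FreeAlgebra.ι 𝕜 (.L i) else 0)

/-- The Drinfel'd double `𝒰(χ)`, presented by generators and relations. -/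
abbrev UAlg (χ : (I → ℤ) → (I → ℤ) → 𝕜) : Type _ := RingQuot (URel 𝕜 χ)

variable (χ : (I → ℤ) → (I → ℤ) → 𝕜)

/-- The canonical projection from the free algebra onto `𝒰(χ)`. -/
noncomputable def mkU : FreeAlgebra 𝕜 (UGen I) →ₐ[𝕜] UAlg χ :=
  RingQuot.mkAlgHom 𝕜 (URel 𝕜 χ)

/-- The generator `K_i` of `𝒰(χ)`. -/
noncomputable def uK (i : I) : UAlg χ := mkU χ (FreeAlgebra.ι 𝕜 (.K i))
/-- The generator `K_i⁻¹` of `𝒰(χ)`. -/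
noncomputable def uKinv (i : I) : UAlg χ := mkU χ (FreeAlgebra.ι 𝕜 (.Kinv i))
/-- The generator `L_i` of `𝒰(χ)`. -/
noncomputable def uL (i : I) : UAlg χ := mkU χ (FreeAlgebra.ι 𝕜 (.L i))
/-- The generator `L_i⁻¹` of `𝒰(χ)`. -/
noncomputable def uLinv (i : I) : UAlg χ := mkU χ (FreeAlgebra.ι 𝕜 (.Linv i))
/-- The generator `E_i` of `𝒰(χ)`. -/
noncomputable def uE (i : I) : UAlg χ := mkU χ (FreeAlgebra.ι 𝕜 (.E i))
/-- The generator `F_i` of `𝒰(χ)`. -/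
noncomputable def uF (i : I) : UAlg χ := mkU χ (FreeAlgebra.ι 𝕜 (.F i))

section Phi4Aux

/-- Image of each generator under the antiautomorphism: `E ↔ F`, toral fixed. -/
noncomputable def gimg : UGen I → UAlg χ
  | .K i => uK χ i
  | .Kinv i => uKinv χ i
  | .L i => uL χ i
  | .Linv i => uLinv χ i
  | .E i => uF χ i
  | .F i => uE χ i

lemma gimg_toral {x : UGen I} (hx : x.IsToral) :
    gimg χ x = mkU χ (FreeAlgebra.ι 𝕜 x) := by
  cases x <;> simp_all [gimg, UGen.IsToral, uK, uKinv, uL, uLinv]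

lemma urel_apply {a b : FreeAlgebra 𝕜 (UGen I)} (h : URel 𝕜 χ a b) :
    mkU χ a = mkU χ b := RingQuot.mkAlgHom_rel 𝕜 h

lemma ucomm {x y : UGen I} (hx : x.IsToral) (hy : y.IsToral) :
    mkU χ (FreeAlgebra.ι 𝕜 x) * mkU χ (FreeAlgebra.ι 𝕜 y) =
      mkU χ (FreeAlgebra.ι 𝕜 y) * mkU χ (FreeAlgebra.ι 𝕜 x) := by
  have := urel_apply χ (URel.comm x y hx hy)
  simpa [map_mul] using this

/-- The lift of the generator images to the free algebra, landing in `(UAlg χ)ᵐᵒᵖ`. -/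
noncomputable def phiFree : FreeAlgebra 𝕜 (UGen I) →ₐ[𝕜] (UAlg χ)ᵐᵒᵖ :=
  FreeAlgebra.lift 𝕜 (fun x => MulOpposite.op (gimg χ x))

lemma phiFree_respects (hχ : IsBichar χ) :
    ∀ ⦃a b : FreeAlgebra 𝕜 (UGen I)⦄, URel 𝕜 χ a b → phiFree χ a = phiFree χ b := by
  have hne := hχ.2.2
  intro a b h
  induction h with
  | comm x y hx hy =>
      simp only [phiFree, map_mul, FreeAlgebra.lift_ι_apply, ← MulOpposite.op_mul]
      rw [gimg_toral χ hx, gimg_toral χ hy, ucomm χ hy hx]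
  | KKinv i =>
      have h := urel_apply χ (URel.KKinv (𝕜 := 𝕜) (χ := χ) i)
      simp only [map_mul, map_one] at h
      simp only [phiFree, map_mul, map_one, FreeAlgebra.lift_ι_apply, ← MulOpposite.op_mul,
        ← MulOpposite.op_one, gimg, uK, uKinv]
      congr 1
      rw [ucomm χ (by trivial) (by trivial), h]
  | LLinv i =>
      have h := urel_apply χ (URel.LLinv (𝕜 := 𝕜) (χ := χ) i)
      simp only [map_mul, map_one] at h
      simp only [phiFree, map_mul, map_one, FreeAlgebra.lift_ι_apply, ← MulOpposite.op_mul,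
        ← MulOpposite.op_one, gimg, uL, uLinv]
      congr 1
      rw [ucomm χ (by trivial) (by trivial), h]
  | KE i j =>
      have h := urel_apply χ (URel.KF (𝕜 := 𝕜) (χ := χ) i j)
      simp only [map_mul, map_smul] at h
      simp only [phiFree, map_mul, map_smul, FreeAlgebra.lift_ι_apply, gimg, uK, uF,
        ← MulOpposite.op_mul, ← MulOpposite.op_smul]
      congr 1
      rw [h, smul_smul, mul_inv_cancel₀ (hne _ _), one_smul]
  | LE i j =>
      have h := urel_apply χ (URel.LF (𝕜 := 𝕜) (χ := χ) i j)
      simp only [map_mul, map_smul] at h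
      simp only [phiFree, map_mul, map_smul, FreeAlgebra.lift_ι_apply, gimg, uL, uF,
        ← MulOpposite.op_mul, ← MulOpposite.op_smul]
      congr 1
      rw [h, smul_smul, inv_mul_cancel₀ (hne _ _), one_smul]
  | KF i j =>
      have h := urel_apply χ (URel.KE (𝕜 := 𝕜) (χ := χ) i j)
      simp only [map_mul, map_smul] at h
      simp only [phiFree, map_mul, map_smul, FreeAlgebra.lift_ι_apply, gimg, uK, uE,
        ← MulOpposite.op_mul, ← MulOpposite.op_smul]
      congr 1
      rw [h, smul_smul, inv_mul_cancel₀ (hne _ _), one_smul]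
  | LF i j =>
      have h := urel_apply χ (URel.LE (𝕜 := 𝕜) (χ := χ) i j)
      simp only [map_mul, map_smul] at h
      simp only [phiFree, map_mul, map_smul, FreeAlgebra.lift_ι_apply, gimg, uL, uE,
        ← MulOpposite.op_mul, ← MulOpposite.op_smul]
      congr 1
      rw [h, smul_smul, mul_inv_cancel₀ (hne _ _), one_smul]
  | EF i j =>
      have h := urel_apply χ (URel.EF (𝕜 := 𝕜) (χ := χ) j i)
      simp only [map_sub, map_mul] at h
      simp only [phiFree, map_sub, map_mul, FreeAlgebra.lift_ι_apply, gimg, uE, uF, uK, uL,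
        ← MulOpposite.op_mul, ← MulOpposite.op_sub]
      rw [h]
      by_cases hij : i = j
      · subst hij; simp [map_sub]
      · rw [if_neg hij, if_neg (Ne.symm hij)]; simp

/-- The antiautomorphism as an algebra hom into the opposite algebra. -/
noncomputable def phiOp (hχ : IsBichar χ) : UAlg χ →ₐ[𝕜] (UAlg χ)ᵐᵒᵖ :=
  RingQuot.liftAlgHom 𝕜 ⟨phiFree χ, phiFree_respects χ hχ⟩

lemma phiOp_mkU (hχ : IsBichar χ) (a : FreeAlgebra 𝕜 (UGen I)) :
    phiOp χ hχ (mkU χ a) = phiFree χ a :=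
  RingQuot.liftAlgHom_mkAlgHom_apply 𝕜 _ _ _

end Phi4Aux

/-- Prop. (pr:algiso)(7): there is a unique algebra antiautomorphism `φ₄` of
`𝒰(χ)` (a bijective `𝕜`-linear map with `φ₄(1) = 1` and `φ₄(XY) = φ₄(Y)φ₄(X)`)
with `φ₄(K_i^{±1}) = K_i^{±1}`, `φ₄(L_i^{±1}) = L_i^{±1}`, `φ₄(E_i) = F_i`,
`φ₄(F_i) = E_i`. -/
theorem exists_unique_phi4 (hχ : IsBichar χ) :
    ∃! f : UAlg χ →ₗ[𝕜] UAlg χ,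
      Function.Bijective f ∧
      f 1 = 1 ∧
      (∀ X Y : UAlg χ, f (X * Y) = f Y * f X) ∧
      (∀ i, f (uK χ i) = uK χ i) ∧
      (∀ i, f (uKinv χ i) = uKinv χ i) ∧
      (∀ i, f (uL χ i) = uL χ i) ∧
      (∀ i, f (uLinv χ i) = uLinv χ i) ∧
      (∀ i, f (uE χ i) = uF χ i) ∧
      (∀ i, f (uF χ i) = uE χ i) := by
  classical
  set φ := phiOp χ hχ with hφ
  set f : UAlg χ →ₗ[𝕜] UAlg χ :=
    ((MulOpposite.opLinearEquiv 𝕜).symm.toLinearMap.comp φ.toLinearMap) with hf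
  have hfapp : ∀ x, f x = MulOpposite.unop (φ x) := fun x => rfl
  have hsurj := RingQuot.mkAlgHom_surjective 𝕜 (URel 𝕜 χ)
  have hone : f 1 = 1 := by rw [hfapp, map_one]; rfl
  have hanti : ∀ X Y : UAlg χ, f (X * Y) = f Y * f X := by
    intro X Y
    rw [hfapp, hfapp, hfapp, map_mul, MulOpposite.unop_mul]
  have hK : ∀ i, f (uK χ i) = uK χ i := by
    intro i
    rw [hfapp, uK, phiOp_mkU]
    simp [phiFree, gimg, uK]
  have hKinv : ∀ i, f (uKinv χ i) = uKinv χ i := by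
    intro i
    rw [hfapp, uKinv, phiOp_mkU]
    simp [phiFree, gimg, uKinv]
  have hL : ∀ i, f (uL χ i) = uL χ i := by
    intro i
    rw [hfapp, uL, phiOp_mkU]
    simp [phiFree, gimg, uL]
  have hLinv : ∀ i, f (uLinv χ i) = uLinv χ i := by
    intro i
    rw [hfapp, uLinv, phiOp_mkU]
    simp [phiFree, gimg, uLinv]
  have hE : ∀ i, f (uE χ i) = uF χ i := by
    intro i
    rw [hfapp, uE, phiOp_mkU]
    simp [phiFree, gimg, uF]
  have hF : ∀ i, f (uF χ i) = uE χ i := by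
    intro i
    rw [hfapp, uF, phiOp_mkU]
    simp [phiFree, gimg, uE]
  have hgen : ∀ x : UGen I, f (mkU χ (FreeAlgebra.ι 𝕜 x)) = gimg χ x := by
    intro x
    cases x
    · exact hK _
    · exact hKinv _
    · exact hL _
    · exact hLinv _
    · exact hE _
    · exact hF _
  have hinv : ∀ x, f (f x) = x := by
    intro x
    obtain ⟨a, rfl⟩ := hsurj x
    change f (f (mkU χ a)) = mkU χ a
    induction a using FreeAlgebra.induction with
    | grade0 r =>
        rw [show (algebraMap 𝕜 (FreeAlgebra 𝕜 (UGen I)) r) = r • 1 from Algebra.algebraMap_eq_smul_one r]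
        rw [map_smul, map_one, map_smul, map_smul, hone, hone]
    | grade1 x =>
        rw [hgen x]
        cases x
        · exact hK _
        · exact hKinv _
        · exact hL _
        · exact hLinv _
        · exact hF _
        · exact hE _
    | mul a b ih1 ih2 =>
        rw [map_mul, hanti, hanti, ih1, ih2]
    | add a b ih1 ih2 =>
        rw [map_add, map_add, map_add, ih1, ih2]
  refine ⟨f, ⟨Function.bijective_iff_has_inverse.2 ⟨f, hinv, hinv⟩,
    hone, hanti, hK, hKinv, hL, hLinv, hE, hF⟩, ?_⟩
  rintro g ⟨-, gone, ganti, gK, gKinv, gL, gLinv, gE, gF⟩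
  have ggen : ∀ x : UGen I, g (mkU χ (FreeAlgebra.ι 𝕜 x)) = gimg χ x := by
    intro x
    cases x
    · exact gK _
    · exact gKinv _
    · exact gL _
    · exact gLinv _
    · exact gE _
    · exact gF _
  apply LinearMap.ext
  intro x
  obtain ⟨a, rfl⟩ := hsurj x
  change g (mkU χ a) = f (mkU χ a)
  induction a using FreeAlgebra.induction with
  | grade0 r =>
      rw [show (algebraMap 𝕜 (FreeAlgebra 𝕜 (UGen I)) r) = r • 1 from Algebra.algebraMap_eq_smul_one r]
      rw [map_smul, map_one, map_smul, map_smul, gone, hone]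
  | grade1 x => rw [hgen, ggen]
  | mul a b ih1 ih2 =>
      rw [map_mul, hanti, ganti, ih1, ih2]
  | add a b ih1 ih2 =>
      rw [map_add, map_add, map_add, ih1, ih2]
end

section
/- Let χ be a bicharacter on ℤ^I with values in 𝕜∖{0}, p ∈ I and i ∈ I∖{p}. Then in 𝒰(χ): (a) for all m ∈ ℕ, E_p^m F_p − F_p E_p^m = [m]_{q_pp}·(q_pp^{1−m}K_p − L_p)·E_p^{m−1}; (b) for all m ∈ ℕ, E^+_{i,m}F_p − F_pE^+_{i,m} = [m]_{q_pp}·(q_pp^{m−1}q_{pi}q_{ip} − 1)·L_p·E^+_{i,m−1}; (c) for all m ∈ ℕ₀, E^+_{i,m}F_i − F_iE^+_{i,m} = q_{ip}^{−m}·(∏_{s=0}^{m−1}(1 − q_pp^s q_{pi}q_{ip}))·K_i·E_p^m − δ_{m,0}·L_i. -/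
variable {𝕜 : Type*} [Field 𝕜] {I : Type*} [Fintype I] [DecidableEq I]

variable (χ : (I → ℤ) → (I → ℤ) → 𝕜)

/-- The general recursion `Y_0 = Y`, `Y_{m+1} = X Y_m − α β^m Y_m X`; with
`X = E_p`, `Y = E_i`, `α = q_{pi}`, `β = q_{pp}` this gives `E^+_{i,m}`. -/
def recE {A : Type*} [Ring A] [Algebra 𝕜 A] (α β : 𝕜) (X Y : A) : ℕ → A
  | 0 => Y
  | m + 1 => X * recE α β X Y m - (α * β ^ m) • (recE α β X Y m * X)

/-! Everything follows from the Leibniz rule `⁅ab, c⁆ = a⁅b, c⁆ + ⁅a, c⁆b` and from the fact that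
`K_j` and `L_j` skew-commute with `E^+_{i,m}` by a scalar, `E^+_{i,m}` being homogeneous of degree
`mε_p + ε_i`. Bracketing the recursion `E^+_{i,m+1} = E_pE^+_{i,m} - q_{pi}q_{pp}^m E^+_{i,m}E_p`
with `F` therefore yields a first-order recursion for a scalar coefficient, solved by the
`q`-integers resp. the products of the statement. For `F = F_p` the `K_p`-terms cancel, since
`q_{pi}q_{pp}^m` is exactly the scalar by which `K_p` skew-commutes with `E^+_{i,m}`. -/

theorem qNat_succ (q : 𝕜) (n : ℕ) : qNat q (n + 1) = q * qNat q n + 1 :=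
  geom_sum_succ

theorem qNat_succ' (q : 𝕜) (n : ℕ) : qNat q (n + 1) = qNat q n + q ^ n := by
  rw [qNat, geom_sum_succ', add_comm]
  rfl

section SkewCommutation

variable {A : Type*} [Ring A] [Algebra 𝕜 A]

theorem Ring.mul_lie (a b c : A) : ⁅a * b, c⁆ = a * ⁅b, c⁆ + ⁅a, c⁆ * b := by
  simp only [Ring.lie_def, mul_sub, sub_mul, mul_assoc]
  abel

theorem recE_mul_of_mul_eq_smul {α β c d : 𝕜} {X Y T : A} (hX : X * T = c • (T * X))
    (hY : Y * T = d • (T * Y)) (m : ℕ) :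
    recE α β X Y m * T = (c ^ m * d) • (T * recE α β X Y m) := by
  induction m with
  | zero => simpa [recE] using hY
  | succ m ih =>
    simp only [recE, sub_mul, mul_sub, smul_mul_assoc, mul_smul_comm, mul_assoc, ih, hX]
    simp only [← mul_assoc, hX, smul_mul_assoc, smul_smul, ih, smul_sub]
    match_scalars <;> ring

theorem lie_recE_succ (α β : 𝕜) (X Y G : A) (m : ℕ) :
    ⁅recE α β X Y (m + 1), G⁆ =
      X * ⁅recE α β X Y m, G⁆ + ⁅X, G⁆ * recE α β X Y m -
        (α * β ^ m) • (⁅recE α β X Y m, G⁆ * X + recE α β X Y m * ⁅X, G⁆) := by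
  simp only [recE, Ring.lie_def, mul_sub, sub_mul, smul_sub, smul_add, smul_mul_assoc,
    mul_smul_comm, mul_assoc]
  abel

theorem lie_pow_succ_eq_qNat_smul {q : 𝕜} {E F K L : A} (hq : q ≠ 0) (hEF : ⁅E, F⁆ = K - L)
    (hEK : E * K = q⁻¹ • (K * E)) (hEL : E * L = q • (L * E)) (m : ℕ) :
    ⁅E ^ (m + 1), F⁆ = qNat q (m + 1) • (((q ^ m)⁻¹ • K - L) * E ^ m) := by
  induction m with
  | zero => simp [qNat, hEF]
  | succ m ih =>
    rw [pow_succ' E, Ring.mul_lie, ih, hEF]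
    simp only [sub_mul, mul_sub, smul_sub, smul_mul_assoc, mul_smul_comm, ← mul_assoc, hEK, hEL]
    simp only [mul_assoc, ← pow_succ', smul_smul]
    match_scalars
    · rw [qNat_succ' q (m + 1)]; field_simp; ring
    · rw [qNat_succ q (m + 1)]; ring

theorem lie_recE_succ_eq_qNat_smul {α γ q : 𝕜} {X Y F K L : A} (hq : q ≠ 0) (hα : α ≠ 0)
    (hXF : ⁅X, F⁆ = K - L) (hYF : ⁅Y, F⁆ = 0)
    (hXK : X * K = q⁻¹ • (K * X)) (hXL : X * L = q • (L * X))
    (hYK : Y * K = α⁻¹ • (K * Y)) (hYL : Y * L = γ • (L * Y)) (m : ℕ) :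
    ⁅recE α q X Y (m + 1), F⁆ =
      (qNat q (m + 1) * (q ^ m * α * γ - 1)) • (L * recE α q X Y m) := by
  have hstep (n : ℕ) : ⁅recE α q X Y (n + 1), F⁆ =
      X * ⁅recE α q X Y n, F⁆ - (α * q ^ n) • (⁅recE α q X Y n, F⁆ * X) +
        (α * q ^ n * (q ^ n * γ) - 1) • (L * recE α q X Y n) := by
    rw [lie_recE_succ, hXF, mul_sub (recE α q X Y n), recE_mul_of_mul_eq_smul hXK hYK,
      recE_mul_of_mul_eq_smul hXL hYL]
    simp only [sub_mul, smul_add, smul_sub, smul_smul, inv_pow]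
    match_scalars <;> field_simp <;> ring
  induction m with
  | zero =>
    rw [hstep]
    simp [recE, hYF, qNat]
  | succ m ih =>
    have hXLY : X * (L * recE α q X Y m) =
        q • (L * recE α q X Y (m + 1)) + (α * q ^ (m + 1)) • (L * recE α q X Y m * X) := by
      simp only [recE, ← mul_assoc, hXL, mul_sub, smul_sub, smul_mul_assoc, mul_smul_comm,
        smul_smul]
      match_scalars <;> ring
    have hqNat : q * qNat q (m + 1) + 1 = qNat q (m + 1) + q ^ (m + 1) := by
      rw [← qNat_succ, qNat_succ']
    rw [hstep, ih, mul_smul_comm, smul_mul_assoc, hXLY, qNat_succ q (m + 1)]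
    match_scalars
    · linear_combination (-(α * γ * q ^ (m + 1))) * hqNat
    · ring

theorem lie_recE_eq_prod_smul {α γ q : 𝕜} {X Y G K L : A} (hγ : γ ≠ 0)
    (hXG : ⁅X, G⁆ = 0) (hYG : ⁅Y, G⁆ = K - L)
    (hXK : X * K = γ⁻¹ • (K * X)) (hXL : X * L = α • (L * X)) (m : ℕ) :
    ⁅recE α q X Y m, G⁆ =
      ((γ ^ m)⁻¹ * ∏ s ∈ Finset.range m, (1 - q ^ s * α * γ)) • (K * X ^ m) -
        if m = 0 then L else 0 := by
  induction m with
  | zero => simp [recE, hYG]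
  | succ m ih =>
    have hXδ : X * (if m = 0 then L else 0) = (α * q ^ m) • ((if m = 0 then L else 0) * X) := by
      split_ifs with h <;> simp [h, hXL]
    have hXKX : X * (K * X ^ m) = γ⁻¹ • (K * X ^ (m + 1)) := by
      rw [← mul_assoc, hXK, smul_mul_assoc, mul_assoc, ← pow_succ']
    rw [lie_recE_succ, ih, hXG, mul_sub, sub_mul, hXδ, mul_smul_comm, hXKX, smul_mul_assoc,
      mul_assoc, ← pow_succ, if_neg m.succ_ne_zero, Finset.prod_range_succ]
    simp only [mul_zero, zero_mul, add_zero, sub_zero]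
    generalize ∏ s ∈ Finset.range m, (1 - q ^ s * α * γ) = P
    match_scalars
    · field_simp
      ring
    · ring

end SkewCommutation

section Relations

variable {I : Type*} [DecidableEq I] (χ : (I → ℤ) → (I → ℤ) → 𝕜)

theorem uE_mul_uK {i j : I} (h : χ (eps i) (eps j) ≠ 0) :
    uE χ j * uK χ i = (χ (eps i) (eps j))⁻¹ • (uK χ i * uE χ j) := by
  have hKE := RingQuot.mkAlgHom_rel 𝕜 (URel.KE (χ := χ) i j)
  simp only [map_mul, map_smul] at hKE
  exact (eq_inv_smul_iff₀ h).mpr hKE.symm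

theorem uE_mul_uL {i j : I} (h : χ (eps j) (eps i) ≠ 0) :
    uE χ j * uL χ i = χ (eps j) (eps i) • (uL χ i * uE χ j) := by
  have hLE := RingQuot.mkAlgHom_rel 𝕜 (URel.LE (χ := χ) i j)
  simp only [map_mul, map_smul] at hLE
  exact (inv_smul_eq_iff₀ h).mp hLE.symm

theorem lie_uE_uF_self (i : I) : ⁅uE χ i, uF χ i⁆ = uK χ i - uL χ i := by
  have hEF := RingQuot.mkAlgHom_rel 𝕜 (URel.EF (χ := χ) i i)
  rw [if_pos rfl] at hEF
  simp only [map_mul, map_sub] at hEF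
  exact hEF

theorem lie_uE_uF_of_ne {i j : I} (h : i ≠ j) : ⁅uE χ i, uF χ j⁆ = 0 := by
  have hEF := RingQuot.mkAlgHom_rel 𝕜 (URel.EF (χ := χ) i j)
  rw [if_neg h] at hEF
  simp only [map_mul, map_sub, map_zero] at hEF
  exact hEF

end Relations

/-- Corollary (co:rootvrel), parts for `F_p` and `F_i`: commutators of
`E_p^m` and `E^+_{i,m}` with `F_p`, `F_i` in `𝒰(χ)`. -/
theorem commutators_rootvrel (hχ : IsBichar χ) (p i : I) (hip : i ≠ p) :
    (∀ m : ℕ, 1 ≤ m →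
      uE χ p ^ m * uF χ p - uF χ p * uE χ p ^ m =
        qNat (χ (eps p) (eps p)) m •
          ((χ (eps p) (eps p) ^ ((1 : ℤ) - (m : ℤ)) • uK χ p - uL χ p) *
            uE χ p ^ (m - 1))) ∧
    (∀ m : ℕ, 1 ≤ m →
      recE (χ (eps p) (eps i)) (χ (eps p) (eps p)) (uE χ p) (uE χ i) m * uF χ p -
          uF χ p * recE (χ (eps p) (eps i)) (χ (eps p) (eps p)) (uE χ p) (uE χ i) m =
        (qNat (χ (eps p) (eps p)) m *
            (χ (eps p) (eps p) ^ (m - 1) * χ (eps p) (eps i) * χ (eps i) (eps p) - 1)) •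
          (uL χ p *
            recE (χ (eps p) (eps i)) (χ (eps p) (eps p)) (uE χ p) (uE χ i) (m - 1))) ∧
    (∀ m : ℕ,
      recE (χ (eps p) (eps i)) (χ (eps p) (eps p)) (uE χ p) (uE χ i) m * uF χ i -
          uF χ i * recE (χ (eps p) (eps i)) (χ (eps p) (eps p)) (uE χ p) (uE χ i) m =
        (χ (eps i) (eps p) ^ (-(m : ℤ)) *
            ∏ s ∈ Finset.range m,
              (1 - χ (eps p) (eps p) ^ s * χ (eps p) (eps i) * χ (eps i) (eps p))) •
          (uK χ i * uE χ p ^ m) -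
        (if m = 0 then uL χ i else 0)) := by
  have hχ0 (a b : I) : χ (eps a) (eps b) ≠ 0 := hχ.2.2 _ _
  refine ⟨fun m hm => ?_, fun m hm => ?_, fun m => ?_⟩
  · obtain ⟨k, rfl⟩ := Nat.exists_eq_add_of_le' hm
    rw [show (1 : ℤ) - ((k + 1 : ℕ) : ℤ) = -k by push_cast; ring, zpow_neg, zpow_natCast,
      Nat.add_sub_cancel]
    exact lie_pow_succ_eq_qNat_smul (hχ0 p p) (lie_uE_uF_self χ p) (uE_mul_uK χ (hχ0 p p))
      (uE_mul_uL χ (hχ0 p p)) k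
  · obtain ⟨k, rfl⟩ := Nat.exists_eq_add_of_le' hm
    rw [Nat.add_sub_cancel]
    exact lie_recE_succ_eq_qNat_smul (hχ0 p p) (hχ0 p i) (lie_uE_uF_self χ p)
      (lie_uE_uF_of_ne χ hip) (uE_mul_uK χ (hχ0 p p)) (uE_mul_uL χ (hχ0 p p))
      (uE_mul_uK χ (hχ0 p i)) (uE_mul_uL χ (hχ0 i p)) k
  · rw [zpow_neg, zpow_natCast]
    exact lie_recE_eq_prod_smul (hχ0 i p) (lie_uE_uF_of_ne χ hip.symm) (lie_uE_uF_self χ i)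
      (uE_mul_uK χ (hχ0 i p)) (uE_mul_uL χ (hχ0 p i)) m
end
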